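/- arXiv:2202.03550 — 2 statements merged into one kernel-verified Lean document; each statement's English description precedes it below -/
import Mathlib

section
/- Let a ∈ ℂ with 0 < |a| < 1, set â = a/|a| and δ = 1 − |a|, and let M_a(z) = (conj(z) − a)/(1 − conj(a)·conj(z)). Then for every α ∈ (0,1) and every z ∈ ℂ with |z| ≤ 1 − δ^α, one has |M_a(z) + â| ≤ 2·δ^(1−α). -/
/-- the anti-Möbius map `M_a` is close to the constant `-â` on the
disk of radius `1 - δ^α`, where `δ = 1 - |a|` and `â = a/|a|`. -/
theorem antiMobius_close_to_constant (a : ℂ) (ha0 : 0 < ‖a‖)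
    (ha1 : ‖a‖ < 1) (α : ℝ) (hα0 : 0 < α) (hα1 : α < 1) (z : ℂ)
    (hz : ‖z‖ ≤ 1 - (1 - ‖a‖) ^ α) :
    ‖((starRingEnd ℂ) z - a) / (1 - (starRingEnd ℂ) a * (starRingEnd ℂ) z)
        + a / ((‖a‖ : ℝ) : ℂ)‖ ≤ 2 * (1 - ‖a‖) ^ (1 - α) := by
  set r := ‖a‖ with hr
  set δ := 1 - r with hδ
  have hδ0 : 0 < δ := by simp [hδ]; linarith
  have hδ1 : δ ≤ 1 := by simp [hδ]; linarith
  have hδα0 : 0 < δ ^ α := Real.rpow_pos_of_pos hδ0 α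
  have hδα1 : δ ^ α ≤ 1 := Real.rpow_le_one hδ0.le hδ1 hα0.le
  have hz1 : ‖z‖ < 1 := lt_of_le_of_lt hz (by linarith)
  have hzn : 0 ≤ ‖z‖ := norm_nonneg z
  have hw : ‖(starRingEnd ℂ) a * (starRingEnd ℂ) z‖ < 1 := by
    rw [norm_mul, Complex.norm_conj, Complex.norm_conj, ← hr]
    nlinarith
  have hD : (1 : ℂ) - (starRingEnd ℂ) a * (starRingEnd ℂ) z ≠ 0 := by
    intro h
    have : (starRingEnd ℂ) a * (starRingEnd ℂ) z = 1 := by linear_combination -h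
    rw [this] at hw
    simp at hw
  have hr0 : ((r : ℝ) : ℂ) ≠ 0 := by exact_mod_cast ha0.ne'
  have hsq : a * (starRingEnd ℂ) a = ((r : ℝ) : ℂ) ^ 2 := by
    rw [Complex.mul_conj]
    norm_cast
    rw [hr]
    exact (Complex.sq_norm a).symm
  have key : ((starRingEnd ℂ) z - a) / (1 - (starRingEnd ℂ) a * (starRingEnd ℂ) z)
      + a / ((r : ℝ) : ℂ)
      = ((δ : ℝ) : ℂ) * (((r : ℝ) : ℂ) * (starRingEnd ℂ) z + a)
        / (((r : ℝ) : ℂ) * (1 - (starRingEnd ℂ) a * (starRingEnd ℂ) z)) := by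
    have hD' : (1 : ℂ) - (starRingEnd ℂ) z * (starRingEnd ℂ) a ≠ 0 := by rwa [mul_comm]
    field_simp
    push_cast [hδ]
    linear_combination (-(starRingEnd ℂ) z) * hsq
  rw [key, norm_div, norm_mul, norm_mul]
  rw [Complex.norm_real, Complex.norm_real, Real.norm_of_nonneg hδ0.le, Real.norm_of_nonneg ha0.le]
  set D := ‖(1 : ℂ) - (starRingEnd ℂ) a * (starRingEnd ℂ) z‖ with hDdef
  have hDpos : 0 < D := norm_pos_iff.mpr hD
  have hnum : ‖((r : ℝ) : ℂ) * (starRingEnd ℂ) z + a‖ ≤ r * (‖z‖ + 1) := by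
    calc ‖((r : ℝ) : ℂ) * (starRingEnd ℂ) z + a‖
        ≤ ‖((r : ℝ) : ℂ) * (starRingEnd ℂ) z‖ + ‖a‖ :=
          norm_add_le _ _
      _ = r * ‖z‖ + r := by
          rw [norm_mul, Complex.norm_real, Real.norm_of_nonneg ha0.le, Complex.norm_conj, ← hr]
      _ = r * (‖z‖ + 1) := by ring
  have hDlb : δ ^ α ≤ D := by
    have h1 : (1 : ℝ) - ‖(starRingEnd ℂ) a * (starRingEnd ℂ) z‖ ≤ D := by
      have := norm_sub_norm_le (1 : ℂ) ((starRingEnd ℂ) a * (starRingEnd ℂ) z)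
      simpa using this
    have h2 : ‖(starRingEnd ℂ) a * (starRingEnd ℂ) z‖ ≤ ‖z‖ := by
      rw [norm_mul, Complex.norm_conj, Complex.norm_conj, ← hr]
      nlinarith
    linarith
  have hmul : δ ^ (1 - α) * δ ^ α = δ := by
    rw [← Real.rpow_add hδ0]
    norm_num
  have hE0 : 0 ≤ δ ^ (1 - α) := (Real.rpow_pos_of_pos hδ0 _).le
  rw [div_le_iff₀ (by positivity)]
  nlinarith [mul_le_mul_of_nonneg_left hDlb (by positivity : (0:ℝ) ≤ 2 * δ ^ (1 - α) * r),
    mul_le_mul_of_nonneg_left hnum hδ0.le,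
    mul_le_mul_of_nonneg_left hz1.le (by positivity : (0:ℝ) ≤ δ * r)]
end

section
/- Let d ≥ 2 and let m_{−d} : ℝ/ℤ → ℝ/ℤ be t ↦ −d·t. The d + 1 fixed points of m_{−d} are exactly the points k/(d+1) for k = 0, 1, …, d, and they partition the circle into d + 1 arcs I_0, …, I_d such that for each i, the image m_{−d}(closure(I_i)) equals the union of the closures of all arcs I_j with j ≠ i. -/
/-!
Lifted to `ℝ`, the map `t ↦ -d • t` is `x ↦ -d x ≡ x - (d + 1) x (mod 1)`, so its fixed points
are the `(d + 1)`-torsion points `k / (d + 1)`. On the closed arc `[i, i + 1] / (d + 1)` we may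
instead lift it as `x ↦ (i + 1) - d x`, which maps that arc onto `[i + 1, i + 1 + d] / (d + 1)`:
the `d` consecutive arcs `i + 1, …, i + d`, which modulo `d + 1` are all arcs but the `i`-th.
-/

open Set

theorem closure_image_Ioo_eq_image_Icc {α X : Type*} [LinearOrder α] [TopologicalSpace α]
    [OrderTopology α] [DenselyOrdered α] [CompactIccSpace α] [TopologicalSpace X] [T2Space X]
    {f : α → X} (hf : Continuous f) {a b : α} (hab : a < b) :
    closure (f '' Ioo a b) = f '' Icc a b := by
  rw [← image_closure_of_isCompact (by rw [closure_Ioo hab.ne]; exact isCompact_Icc)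
    hf.continuousOn, closure_Ioo hab.ne]

theorem Monotone.Icc_eq_biUnion_Icc {α : Type*} [LinearOrder α] {f : ℕ → α} (hf : Monotone f)
    {n : ℕ} (hn : 0 < n) : Icc (f 0) (f n) = ⋃ m < n, Icc (f m) (f (m + 1)) := by
  induction n, hn using Nat.le_induction with
  | base => simp
  | succ n _ ih =>
    rw [biUnion_lt_succ, ← ih, Icc_union_Icc_eq_Icc (hf n.zero_le) (hf n.le_succ)]

theorem Function.Periodic.biUnion_lt_add_eq_biUnion_ne {α : Type*} {A : ℕ → Set α} {n : ℕ}
    (hA : Function.Periodic A (n + 1)) {i : ℕ} (hi : i ≤ n) :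
    ⋃ m < n, A (i + 1 + m) = ⋃ j ∈ {j | j ≤ n ∧ j ≠ i}, A j := by
  apply Subset.antisymm
  · refine iUnion₂_subset fun m hm => ?_
    by_cases h : i + 1 + m ≤ n
    · exact subset_biUnion_of_mem (u := A)
        (show i + 1 + m ∈ {j | j ≤ n ∧ j ≠ i} from ⟨h, by omega⟩)
    · rw [show i + 1 + m = (i + m - n) + (n + 1) by omega, hA]
      exact subset_biUnion_of_mem (u := A)
        (show i + m - n ∈ {j | j ≤ n ∧ j ≠ i} from ⟨by omega, by omega⟩)
  · refine iUnion₂_subset fun j ⟨hjn, hji⟩ => ?_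
    rcases lt_or_gt_of_ne hji with h | h
    · rw [← hA j, show j + (n + 1) = i + 1 + (j + n - i) by omega]
      exact subset_biUnion_of_mem (u := fun m => A (i + 1 + m)) (show j + n - i < n by omega)
    · rw [show j = i + 1 + (j - i - 1) by omega]
      exact subset_biUnion_of_mem (u := fun m => A (i + 1 + m)) (show j - i - 1 < n by omega)

theorem neg_natCast_zsmul_eq_self_iff {G : Type*} [AddGroup G] (d : ℕ) (t : G) :
    (-(d : ℤ)) • t = t ↔ (d + 1) • t = 0 := by
  rw [neg_zsmul, natCast_zsmul, neg_eq_iff_add_eq_zero, succ_nsmul]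

namespace MarkovPartition

variable (d : ℕ)

theorem coe_natCast_eq_zero (n : ℕ) : ((n : ℝ) : AddCircle (1 : ℝ)) = 0 := by
  rw [← nsmul_one, AddCircle.coe_nsmul, AddCircle.coe_period, smul_zero]

theorem neg_zsmul_coe_natCast_div (k : ℕ) :
    (-(d : ℤ)) • (((k : ℝ) / (d + 1) : ℝ) : AddCircle (1 : ℝ)) = ((k : ℝ) / (d + 1) : ℝ) := by
  rw [neg_natCast_zsmul_eq_self_iff, ← AddCircle.coe_nsmul, nsmul_eq_mul, Nat.cast_succ,
    mul_div_cancel₀ _ (by positivity), coe_natCast_eq_zero]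

theorem setOf_neg_zsmul_eq_self :
    {t : AddCircle (1 : ℝ) | (-(d : ℤ)) • t = t} =
      {t | ∃ k ≤ d, t = (((k : ℝ) / (d + 1) : ℝ) : AddCircle (1 : ℝ))} := by
  ext t
  simp only [mem_ofPred_eq, neg_natCast_zsmul_eq_self_iff, AddCircle.nsmul_eq_zero_iff d.succ_pos,
    Nat.lt_succ_iff, Nat.cast_succ, mul_one, eq_comm (a := t)]

def arc (k : ℕ) : Set (AddCircle (1 : ℝ)) :=
  ((↑) : ℝ → AddCircle (1 : ℝ)) '' Icc ((k : ℝ) / (d + 1)) (((k : ℝ) + 1) / (d + 1))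

theorem arc_periodic : Function.Periodic (arc d) (d + 1) := by
  intro k
  have hshift (x : ℝ) : (x + (d + 1)) / (d + 1) = x / (d + 1) + 1 := by field_simp
  simp only [arc, Nat.cast_add, Nat.cast_succ]
  rw [add_right_comm (k : ℝ) _ 1, hshift, hshift, ← image_add_const_Icc, image_image]
  simp only [AddCircle.coe_add_period]

theorem image_Icc_eq_biUnion_arc (a : ℕ) {n : ℕ} (hn : 0 < n) :
    ((↑) : ℝ → AddCircle (1 : ℝ)) '' Icc ((a : ℝ) / (d + 1)) (((a + n : ℕ) : ℝ) / (d + 1)) =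
      ⋃ m < n, arc d (a + m) := by
  have hmono : Monotone fun m : ℕ => ((a + m : ℕ) : ℝ) / (d + 1) := fun _ _ h => by
    dsimp only
    gcongr
  have htile := hmono.Icc_eq_biUnion_Icc hn
  simp only [add_zero] at htile
  rw [htile, image_iUnion₂]
  simp only [arc, ← add_assoc, Nat.cast_succ]

theorem biUnion_arc_eq_univ : ⋃ k < d + 1, arc d k = univ := by
  have htile := image_Icc_eq_biUnion_arc d 0 d.succ_pos
  simp only [zero_add, Nat.cast_zero, zero_div, Nat.cast_succ,
    div_self (by positivity : (d : ℝ) + 1 ≠ 0)] at htile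
  rw [← htile]
  simpa using AddCircle.coe_image_Icc_eq (p := (1 : ℝ)) 0

theorem neg_zsmul_image_arc (i : ℕ) :
    (fun t : AddCircle (1 : ℝ) => (-(d : ℤ)) • t) '' arc d i =
      ((↑) : ℝ → AddCircle (1 : ℝ)) '' Icc (((i + 1 : ℕ) : ℝ) / (d + 1))
        (((i + 1 + d : ℕ) : ℝ) / (d + 1)) := by
  have hlift : (fun t : AddCircle (1 : ℝ) => (-(d : ℤ)) • t) ∘ ((↑) : ℝ → AddCircle (1 : ℝ)) =
      ((↑) : ℝ → AddCircle (1 : ℝ)) ∘ (fun x => ((i + 1 : ℕ) : ℝ) - x) ∘ (fun x => d * x) := by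
    ext x
    simp [sub_eq_neg_add, coe_natCast_eq_zero]
  rw [arc, image_image, ← Function.comp_def, hlift, image_comp, image_comp,
    image_mul_left_Icc (by positivity) (by gcongr; linarith), image_const_sub_Icc]
  congr 2 <;> push_cast <;> field_simp <;> ring

theorem arc_subset_union_image_Ioo (k : ℕ) :
    arc d k ⊆ {t | (-(d : ℤ)) • t = t} ∪
      ((↑) : ℝ → AddCircle (1 : ℝ)) '' Ioo ((k : ℝ) / (d + 1)) (((k : ℝ) + 1) / (d + 1)) := by
  rintro _ ⟨x, ⟨hleft, hright⟩, rfl⟩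
  rcases hleft.eq_or_lt with rfl | hleft
  · exact .inl (neg_zsmul_coe_natCast_div d k)
  rcases hright.eq_or_lt with rfl | hright
  · exact .inl (by exact_mod_cast neg_zsmul_coe_natCast_div d (k + 1))
  exact .inr ⟨x, ⟨hleft, hright⟩, rfl⟩

end MarkovPartition

open MarkovPartition in
/-- the fixed points of `m_{-d} : t ↦ -d·t` on `ℝ/ℤ` are exactly
the points `k/(d+1)`, `0 ≤ k ≤ d`; they cut the circle into the `d+1` arcs
`I_k = (k/(d+1), (k+1)/(d+1))`, and `m_{-d}(closure I_i) = ⋃_{j ≠ i} closure I_j`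
(the Markov property). -/
theorem markov_partition_neg_power (d : ℕ) (hd : 2 ≤ d) :
    let f : AddCircle (1 : ℝ) → AddCircle (1 : ℝ) := fun t => (-(d : ℤ)) • t
    let I : ℕ → Set (AddCircle (1 : ℝ)) := fun k =>
      (fun x : ℝ => (x : AddCircle (1 : ℝ))) ''
        Set.Ioo ((k : ℝ) / (d + 1)) (((k : ℝ) + 1) / (d + 1))
    ({t | f t = t} =
        {t | ∃ k ≤ d, t = (((k : ℝ) / (d + 1) : ℝ) : AddCircle (1 : ℝ))}) ∧
      (Set.univ = {t | f t = t} ∪ ⋃ j ∈ {j : ℕ | j ≤ d}, I j) ∧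
      (∀ i ≤ d, f '' closure (I i) = ⋃ j ∈ {j : ℕ | j ≤ d ∧ j ≠ i}, closure (I j)) := by
  intro f I
  have hclosure (k : ℕ) : closure (I k) = arc d k :=
    closure_image_Ioo_eq_image_Icc (AddCircle.continuous_mk' (1 : ℝ)) (by gcongr; linarith)
  refine ⟨setOf_neg_zsmul_eq_self d, ?_, fun i hi => ?_⟩
  · refine (eq_univ_of_univ_subset ?_).symm
    rw [← biUnion_arc_eq_univ d]
    refine iUnion₂_subset fun k hk => (arc_subset_union_image_Ioo d k).trans ?_
    exact union_subset_union_right _ (subset_biUnion_of_mem (u := I) (Nat.lt_succ_iff.mp hk))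
  · simp only [hclosure]
    rw [neg_zsmul_image_arc, image_Icc_eq_biUnion_arc d (i + 1) (by omega),
      (arc_periodic d).biUnion_lt_add_eq_biUnion_ne hi]
end
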